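/- arXiv:2202.03594 — 4 statements merged into one kernel-verified Lean document; each statement's English description precedes it below -/
import Mathlib

section
/- Let 1/2 < t < 1. There exists a constant C = C(t) > 0 such that for every natural number M ≥ C there exists a natural number N₀ with the following property. For every natural number n₀ ≥ N₀ and every rectangle R whose dimensions satisfy M·n₀^{-t} ≤ w(R) ≤ h(R) ≤ 3M·n₀^{-t}, there exist a natural number n₀' with n₀ + M²/C ≤ n₀' ≤ n₀ + C·M² and a perfect packing of R by the squares of sidelength n^{-t} for n₀ ≤ n < n₀' (one square of each such sidelength) together with a finite family ℛ of additional rectangles: all squares and rectangles of the packing lie in R, have pairwise disjoint interiors, cover R up to a Lebesgue-null set, every rectangle in ℛ has width at most C·n₀^{-t}, and the total perimeter satisfies ∑_{R'∈ℛ} 2(w(R') + h(R')) ≤ C·M·n₀^{-t}. -/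
/-!
Put `s = n₀ ^ (-t)`, `p = ⌊w / s⌋` and `L = ⌊h / s⌋`. The `p L` squares of sides `n ^ (-t)`,
`n₀ ≤ n < n₀ + p L`, are arranged in `p` columns of `L` consecutive sidelengths each; the columns
are stacked from the bottom and every level is laid out from the left. All these sides lie within
`ε = p L s / n₀` of `s`, and `ε` is tiny once `n₀ ≳ M⁵`, so neighbouring columns differ in height
by less than one square. Hence the squares fill `R` except for a crack of sides at most `p ε` and
`L ε` between neighbouring columns at each level, a strip of width at most `2 s` to the right of
each level, a strip of height at most `2 s` above each column, and a corner: the cracks have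
negligible total perimeter, and the other `p + L + 1 = O(M)` pieces have perimeter `O(s)` each.

A point is assigned to a piece by finding first its column, the last one whose left boundary
(cracks included) at the height of the point is to its left, and then its level. Every point of `R`
lies in the piece it is assigned to, and every interior point of a piece is assigned to that piece;
this gives the covering and the disjointness at once.
-/

open MeasureTheory Set

/-- The closed axis-parallel rectangle with bottom-left corner `(x, y)`,
horizontal sidelength `w` and vertical sidelength `h`. -/
def Box (x y w h : ℝ) : Set (ℝ × ℝ) := Set.Icc x (x + w) ×ˢ Set.Icc y (y + h)

open Finset

namespace SquarePacking

lemma interior_box (x y w h : ℝ) :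
    interior (Box x y w h) = Ioo x (x + w) ×ˢ Ioo y (y + h) := by
  rw [Box, interior_prod_eq, interior_Icc, interior_Icc]

structure Rect where
  x : ℝ
  y : ℝ
  w : ℝ
  h : ℝ

namespace Rect

def box (r : Rect) : Set (ℝ × ℝ) := Box r.x r.y r.w r.h

lemma mem_box {r : Rect} {z : ℝ × ℝ} :
    z ∈ r.box ↔ (r.x ≤ z.1 ∧ z.1 ≤ r.x + r.w) ∧ (r.y ≤ z.2 ∧ z.2 ≤ r.y + r.h) := Iff.rfl

lemma mem_interior_box {r : Rect} {z : ℝ × ℝ} :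
    z ∈ interior r.box ↔ (r.x < z.1 ∧ z.1 < r.x + r.w) ∧ (r.y < z.2 ∧ z.2 < r.y + r.h) := by
  rw [box, interior_box]; rfl

lemma box_subset_box {r R : Rect} (hx : R.x ≤ r.x) (hw : r.x + r.w ≤ R.x + R.w)
    (hy : R.y ≤ r.y) (hh : r.y + r.h ≤ R.y + R.h) : r.box ⊆ R.box :=
  prod_mono (Icc_subset_Icc hx hw) (Icc_subset_Icc hy hh)

end Rect

section Grid

variable (a : ℕ → ℕ → ℝ)

def rowSum (j l : ℕ) : ℝ := ∑ i ∈ range j, a i l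

def colSum (j l : ℕ) : ℝ := ∑ i ∈ range l, a j i

@[simp] lemma rowSum_zero (l : ℕ) : rowSum a 0 l = 0 := sum_range_zero _

@[simp] lemma colSum_zero (j : ℕ) : colSum a j 0 = 0 := sum_range_zero _

lemma rowSum_succ (j l : ℕ) : rowSum a (j + 1) l = rowSum a j l + a j l := sum_range_succ _ _

lemma colSum_succ (j l : ℕ) : colSum a j (l + 1) = colSum a j l + a j l := sum_range_succ _ _

/-- Square `(j, l)` of side `a j l` is the `l`-th from the bottom in the `j`-th column from the
left; the columns are stacked from the bottom and the rows are laid out from the left, so its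
lower left corner is `(rowSum a j l, colSum a j l)`. The last condition says that at every level a
square starts no higher than its left neighbour ends. -/
structure IsDriftGrid (p L : ℕ) : Prop where
  nonneg : ∀ j l, 0 ≤ a j l
  antitone_level : ∀ j, Antitone (a j)
  monotone_column : ∀ l, Monotone (a · l)
  colSum_succ_le : ∀ j l, j + 1 < p → l < L → colSum a (j + 1) l ≤ colSum a j (l + 1)

variable {a} {p L : ℕ} (hg : IsDriftGrid a p L)
include hg

namespace IsDriftGrid

lemma rowSum_mono (l : ℕ) : Monotone (rowSum a · l) :=
  fun _ _ hjk => sum_le_sum_of_subset_of_nonneg (range_subset_range.mpr hjk)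
    fun _ _ _ => hg.nonneg _ _

lemma rowSum_anti (j : ℕ) : Antitone (rowSum a j) :=
  fun _ _ hlm => sum_le_sum fun _ _ => hg.antitone_level _ hlm

lemma colSum_mono (j : ℕ) : Monotone (colSum a j) :=
  fun _ _ hlm => sum_le_sum_of_subset_of_nonneg (range_subset_range.mpr hlm)
    fun _ _ _ => hg.nonneg _ _

lemma rowSum_nonneg (j l : ℕ) : 0 ≤ rowSum a j l := sum_nonneg fun _ _ => hg.nonneg _ _

lemma colSum_nonneg (j l : ℕ) : 0 ≤ colSum a j l := sum_nonneg fun _ _ => hg.nonneg _ _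

lemma colSum_mono_column (l : ℕ) : Monotone (colSum a · l) :=
  fun _ _ hjk => sum_le_sum fun _ _ => hg.monotone_column _ hjk

end IsDriftGrid

end Grid

section Classify

variable (a : ℕ → ℕ → ℝ) (p L : ℕ)

noncomputable def level (j : ℕ) (y : ℝ) : ℕ := Nat.findGreatest (fun l => colSum a j l ≤ y) L

/-- The left boundary, at height `y`, of column `j` together with the cracks on its left. -/
noncomputable def leftEdge (y : ℝ) : ℕ → ℝ
  | 0 => 0
  | j + 1 => rowSum a (j + 1) (level a L j y)

noncomputable def column (x y : ℝ) : ℕ := Nat.findGreatest (fun j => leftEdge a L y j ≤ x) p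

variable {a p L} {j l : ℕ} {x y : ℝ}

lemma level_le : level a L j y ≤ L := Nat.findGreatest_le L

lemma colSum_level_le (hy : 0 ≤ y) : colSum a j (level a L j y) ≤ y :=
  Nat.findGreatest_spec (P := fun l => colSum a j l ≤ y) (Nat.zero_le L) (by simpa using hy)

lemma lt_colSum_level_succ (h : level a L j y < L) : y < colSum a j (level a L j y + 1) :=
  not_le.mp (Nat.findGreatest_is_greatest (Nat.lt_succ_self _) h)

lemma leftEdge_column_le (hx : 0 ≤ x) : leftEdge a L y (column a p L x y) ≤ x :=
  Nat.findGreatest_spec (P := fun j => leftEdge a L y j ≤ x) (Nat.zero_le p) hx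

lemma lt_leftEdge_column_succ (h : column a p L x y < p) :
    x < leftEdge a L y (column a p L x y + 1) :=
  not_le.mp (Nat.findGreatest_is_greatest (Nat.lt_succ_self _) h)

lemma level_eq_top (h : colSum a j L ≤ y) : level a L j y = L := Nat.findGreatest_eq h

variable (hg : IsDriftGrid a p L)
include hg

namespace IsDriftGrid

lemma level_eq (hl : l < L) (h₁ : colSum a j l ≤ y) (h₂ : y < colSum a j (l + 1)) :
    level a L j y = l :=
  Nat.findGreatest_eq_iff.mpr ⟨hl.le, fun _ => h₁, fun _ hln _ hn =>
    h₂.not_ge (le_trans (hg.colSum_mono j hln) hn)⟩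

lemma level_succ_le : level a L (j + 1) y ≤ level a L j y :=
  Nat.findGreatest_mono_left (fun _ hl => le_trans (hg.colSum_mono_column _ j.le_succ) hl) L

lemma level_le_level_succ_add_one (hj : j + 1 < p) :
    level a L j y ≤ level a L (j + 1) y + 1 := by
  by_contra! hcon
  have hlL : level a L (j + 1) y + 1 < L := lt_of_lt_of_le hcon level_le
  refine (lt_irrefl y) ?_
  calc y < colSum a (j + 1) (level a L (j + 1) y + 1) :=
        lt_colSum_level_succ (j := j + 1) (by omega)
    _ ≤ colSum a j (level a L (j + 1) y + 1 + 1) := hg.colSum_succ_le j _ hj hlL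
    _ ≤ colSum a j (level a L j y) := hg.colSum_mono j hcon
    _ ≤ y := Nat.findGreatest_of_ne_zero (m := level a L j y) rfl (by omega)

lemma leftEdge_mono : Monotone (leftEdge a L y) := by
  refine monotone_nat_of_le_succ fun j => ?_
  cases j with
  | zero => exact hg.rowSum_nonneg 1 _
  | succ j =>
    exact (hg.rowSum_anti _ hg.level_succ_le).trans (hg.rowSum_mono _ (Nat.le_succ _))

lemma column_eq (hj : j ≤ p) (h₁ : leftEdge a L y j ≤ x)
    (h₂ : j < p → x < leftEdge a L y (j + 1)) : column a p L x y = j :=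
  Nat.findGreatest_eq_iff.mpr ⟨hj, fun _ => h₁, fun _ hjn hnp hn =>
    (h₂ (lt_of_lt_of_le hjn hnp)).not_ge (le_trans (hg.leftEdge_mono hjn) hn)⟩

end IsDriftGrid

end Classify

inductive Piece
  | square (j l : ℕ)
  | crack (j l : ℕ)
  | right (l : ℕ)
  | top (j : ℕ)
  | corner
  deriving DecidableEq

namespace Piece

variable (a : ℕ → ℕ → ℝ) (p L : ℕ)

def Valid : Piece → Prop
  | square j l => j < p ∧ l < L
  | crack j l => j + 1 < p ∧ l < L
  | right l => l < L
  | top j => j < p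
  | corner => True

/-- `crack j l` is the gap to the left of square `(j + 1, l)` and above square `(j, l)`; the
`right` pieces continue the levels of the last column to the right side of `R`, and the `top`
pieces continue the columns to the top of `R`, as if with widths of a further level `L`. -/
def rect (R : Rect) : Piece → Rect
  | square j l => ⟨R.x + rowSum a j l, R.y + colSum a j l, a j l, a j l⟩
  | crack j l => ⟨R.x + rowSum a (j + 1) (l + 1), R.y + colSum a j (l + 1),
      rowSum a (j + 1) l - rowSum a (j + 1) (l + 1), colSum a (j + 1) (l + 1) - colSum a j (l + 1)⟩
  | right l => ⟨R.x + rowSum a p l, R.y + colSum a (p - 1) l, R.w - rowSum a p l, a (p - 1) l⟩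
  | top j => ⟨R.x + rowSum a j L, R.y + colSum a j L, a j L, R.h - colSum a j L⟩
  | corner => ⟨R.x + rowSum a p L, R.y + colSum a (p - 1) L, R.w - rowSum a p L,
      R.h - colSum a (p - 1) L⟩

end Piece

open Piece

noncomputable def classify (a : ℕ → ℕ → ℝ) (p L : ℕ) (u v : ℝ) : Piece :=
  if column a p L u v = p then
    if level a L (p - 1) v = L then corner else right (level a L (p - 1) v)
  else if level a L (column a p L u v) v = L then top (column a p L u v)
  else if u < rowSum a (column a p L u v) (level a L (column a p L u v) v) then
    crack (column a p L u v - 1) (level a L (column a p L u v) v)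
  else square (column a p L u v) (level a L (column a p L u v) v)

namespace IsDriftGrid

variable {a : ℕ → ℕ → ℝ} {p L : ℕ} (hg : IsDriftGrid a p L) {j l : ℕ} {u v : ℝ}
include hg

lemma leftEdge_le_rowSum_level : leftEdge a L v j ≤ rowSum a j (level a L j v) := by
  cases j with
  | zero => exact le_rfl
  | succ j => exact hg.rowSum_anti _ hg.level_succ_le

lemma rowSum_level_le_leftEdge (h : level a L (j - 1) v ≤ level a L j v) :
    rowSum a j (level a L j v) ≤ leftEdge a L v j := by
  cases j with
  | zero => exact le_rfl
  | succ j => exact hg.rowSum_anti _ h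

lemma classify_square (hj : j < p) (hl : l < L) (hu₁ : rowSum a j l < u)
    (hu₂ : u < rowSum a (j + 1) l) (hv₁ : colSum a j l < v) (hv₂ : v < colSum a j (l + 1)) :
    classify a p L u v = square j l := by
  have hlev : level a L j v = l := hg.level_eq hl hv₁.le hv₂
  have hcol : column a p L u v = j :=
    hg.column_eq hj.le (hg.leftEdge_le_rowSum_level.trans_lt (hlev ▸ hu₁)).le
      fun _ => by rwa [leftEdge, hlev]
  simp [classify, hcol, hlev, hj.ne, hl.ne, hu₁.le]

lemma classify_crack (hj : j + 1 < p) (hl : l < L) (hu₁ : rowSum a (j + 1) (l + 1) < u)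
    (hu₂ : u < rowSum a (j + 1) l) (hv₁ : colSum a j (l + 1) < v)
    (hv₂ : v < colSum a (j + 1) (l + 1)) :
    classify a p L u v = crack j l := by
  have hlev : level a L (j + 1) v = l :=
    hg.level_eq hl ((hg.colSum_succ_le j l hj hl).trans hv₁.le) hv₂
  have hlev' : level a L j v = l + 1 :=
    le_antisymm (hlev ▸ hg.level_le_level_succ_add_one hj) (Nat.le_findGreatest hl hv₁.le)
  have hcol : column a p L u v = j + 1 :=
    hg.column_eq hj.le (by rw [leftEdge, hlev']; exact hu₁.le)
      fun _ => by rw [leftEdge, hlev]; exact hu₂.trans_le (hg.rowSum_mono l (Nat.le_succ _))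
  simp [classify, hcol, hlev, hj.ne, hl.ne, hu₂]

lemma classify_right (hp : 0 < p) (hl : l < L) (hu : rowSum a p l < u)
    (hv₁ : colSum a (p - 1) l < v) (hv₂ : v < colSum a (p - 1) (l + 1)) :
    classify a p L u v = right l := by
  obtain ⟨q, rfl⟩ : ∃ q, p = q + 1 := ⟨p - 1, by omega⟩
  rw [Nat.add_sub_cancel] at hv₁ hv₂
  have hlev : level a L q v = l := hg.level_eq hl hv₁.le hv₂
  have hcol : column a (q + 1) L u v = q + 1 :=
    hg.column_eq le_rfl (by rw [leftEdge, hlev]; exact hu.le) fun h => (lt_irrefl _ h).elim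
  simp [classify, hcol, hlev, hl.ne]

lemma classify_top (hj : j < p) (hu₁ : rowSum a j L < u) (hu₂ : u < rowSum a (j + 1) L)
    (hv : colSum a j L < v) :
    classify a p L u v = top j := by
  have hlev : level a L j v = L := level_eq_top hv.le
  have hcol : column a p L u v = j :=
    hg.column_eq hj.le (hg.leftEdge_le_rowSum_level.trans_lt (by rwa [hlev])).le
      fun _ => by rwa [leftEdge, hlev]
  simp [classify, hcol, hlev, hj.ne]

lemma classify_corner (hp : 0 < p) (hu : rowSum a p L < u) (hv : colSum a (p - 1) L < v) :
    classify a p L u v = corner := by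
  obtain ⟨q, rfl⟩ : ∃ q, p = q + 1 := ⟨p - 1, by omega⟩
  rw [Nat.add_sub_cancel] at hv
  have hlev : level a L q v = L := level_eq_top hv.le
  have hcol : column a (q + 1) L u v = q + 1 :=
    hg.column_eq le_rfl (by rw [leftEdge, hlev]; exact hu.le) fun h => (lt_irrefl _ h).elim
  simp [classify, hcol, hlev]

variable (R : Rect)

lemma classify_eq_of_mem_interior (hp : 0 < p) {P : Piece} (hP : P.Valid p L) {z : ℝ × ℝ}
    (hz : z ∈ interior (P.rect a p L R).box) :
    classify a p L (z.1 - R.x) (z.2 - R.y) = P := by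
  obtain ⟨⟨hx₁, hx₂⟩, hy₁, hy₂⟩ := Rect.mem_interior_box.mp hz
  cases P with
  | square j l =>
    simp only [rect] at hx₁ hx₂ hy₁ hy₂
    exact hg.classify_square hP.1 hP.2 (by linarith) (by rw [rowSum_succ]; linarith)
      (by linarith) (by rw [colSum_succ]; linarith)
  | crack j l =>
    simp only [rect] at hx₁ hx₂ hy₁ hy₂
    exact hg.classify_crack hP.1 hP.2 (by linarith) (by linarith) (by linarith) (by linarith)
  | right l =>
    simp only [rect] at hx₁ hy₁ hy₂
    exact hg.classify_right hp hP (by linarith) (by linarith) (by rw [colSum_succ]; linarith)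
  | top j =>
    simp only [rect] at hx₁ hx₂ hy₁
    exact hg.classify_top hP (by linarith) (by rw [rowSum_succ]; linarith) (by linarith)
  | corner =>
    simp only [rect] at hx₁ hy₁
    exact hg.classify_corner hp (by linarith) (by linarith)

lemma disjoint_interior_rect (hp : 0 < p) {P Q : Piece} (hP : P.Valid p L) (hQ : Q.Valid p L)
    (hPQ : P ≠ Q) :
    Disjoint (interior (P.rect a p L R).box) (interior (Q.rect a p L R).box) :=
  Set.disjoint_left.mpr fun _ hzP hzQ => hPQ <|
    (hg.classify_eq_of_mem_interior R hp hP hzP).symm.trans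
      (hg.classify_eq_of_mem_interior R hp hQ hzQ)

lemma exists_mem_rect_of_column_eq (hp : 0 < p) (hu : 0 ≤ u) (huw : u ≤ R.w) (hv : 0 ≤ v)
    (hvh : v ≤ R.h) (hcol : column a p L u v = p) :
    ∃ P : Piece, P.Valid p L ∧ (R.x + u, R.y + v) ∈ (P.rect a p L R).box := by
  have hedge := leftEdge_column_le (a := a) (p := p) (L := L) (y := v) hu
  obtain ⟨q, rfl⟩ : ∃ q, p = q + 1 := ⟨p - 1, by omega⟩
  rw [hcol, leftEdge] at hedge
  have hlow := colSum_level_le (a := a) (L := L) (j := q) hv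
  rcases (level_le : level a L q v ≤ L).eq_or_lt with hlev | hlev
  · rw [hlev] at hedge hlow
    refine ⟨corner, trivial, ?_⟩
    simp only [Rect.mem_box, rect, Nat.add_sub_cancel]
    constructor <;> constructor <;> linarith
  · have hup := lt_colSum_level_succ hlev
    rw [colSum_succ] at hup
    refine ⟨right (level a L q v), hlev, ?_⟩
    simp only [Rect.mem_box, rect, Nat.add_sub_cancel]
    constructor <;> constructor <;> linarith

lemma exists_mem_rect_of_column_lt (hu : 0 ≤ u) (hv : 0 ≤ v) (hvh : v ≤ R.h)
    (hcol : column a p L u v < p) :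
    ∃ P : Piece, P.Valid p L ∧ (R.x + u, R.y + v) ∈ (P.rect a p L R).box := by
  obtain ⟨J, hJ⟩ : ∃ J, column a p L u v = J := ⟨_, rfl⟩
  have hedge : leftEdge a L v J ≤ u := hJ ▸ leftEdge_column_le hu
  have hnext : u < rowSum a (J + 1) (level a L J v) := hJ ▸ lt_leftEdge_column_succ hcol
  rw [hJ] at hcol
  have hlow := colSum_level_le (a := a) (L := L) (j := J) hv
  have hedge' := hg.rowSum_level_le_leftEdge (j := J) (v := v)
  obtain ⟨l, hl⟩ : ∃ l, level a L J v = l := ⟨_, rfl⟩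
  rw [hl, rowSum_succ] at hnext
  rw [hl] at hlow hedge'
  rcases (hl ▸ level_le : l ≤ L).eq_or_lt with rfl | hlL
  · have hleft : rowSum a J l ≤ u := (hedge' level_le).trans hedge
    refine ⟨top J, hcol, ?_⟩
    simp only [Rect.mem_box, rect]
    constructor <;> constructor <;> linarith
  have hup : v < colSum a J l + a J l := by
    rw [← colSum_succ, ← hl]; exact lt_colSum_level_succ (hl ▸ hlL)
  by_cases hleft : rowSum a J l ≤ u
  · refine ⟨square J l, ⟨hcol, hlL⟩, ?_⟩
    simp only [Rect.mem_box, rect]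
    constructor <;> constructor <;> linarith
  obtain ⟨i, rfl⟩ : ∃ i, J = i + 1 :=
    Nat.exists_eq_succ_of_ne_zero fun h => hleft (by rw [h, rowSum_zero]; exact hu)
  have hlev : level a L i v = l + 1 := by
    have h₁ : l ≤ level a L i v := hl ▸ hg.level_succ_le
    have h₂ : level a L i v ≤ l + 1 := hl ▸ hg.level_le_level_succ_add_one hcol
    rcases h₁.eq_or_lt with h | h
    · exact absurd (by rwa [leftEdge, ← h] at hedge) hleft
    · omega
  rw [leftEdge, hlev] at hedge
  have hlow' := colSum_level_le (a := a) (L := L) (j := i) hv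
  rw [hlev] at hlow'
  refine ⟨crack i l, ⟨hcol, hlL⟩, ?_⟩
  simp only [Rect.mem_box, rect]
  have := colSum_succ a (i + 1) l
  constructor <;> constructor <;> linarith

lemma exists_valid_mem_rect (hp : 0 < p) {z : ℝ × ℝ} (hz : z ∈ R.box) :
    ∃ P : Piece, P.Valid p L ∧ z ∈ (P.rect a p L R).box := by
  obtain ⟨⟨hx₁, hx₂⟩, hy₁, hy₂⟩ := Rect.mem_box.mp hz
  have key : ∃ P : Piece, P.Valid p L ∧
      (R.x + (z.1 - R.x), R.y + (z.2 - R.y)) ∈ (P.rect a p L R).box := by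
    rcases (Nat.findGreatest_le p : column a p L (z.1 - R.x) (z.2 - R.y) ≤ p).eq_or_lt
      with hcol | hcol
    · exact hg.exists_mem_rect_of_column_eq R hp (by linarith) (by linarith) (by linarith)
        (by linarith) hcol
    · exact hg.exists_mem_rect_of_column_lt R (by linarith) (by linarith) (by linarith) hcol
  simpa using key

variable (hw : rowSum a p 0 ≤ R.w) (hh : colSum a (p - 1) L ≤ R.h)

include hw in
lemma rowSum_le_width (hj : j ≤ p) : rowSum a j l ≤ R.w :=
  ((hg.rowSum_mono l hj).trans (hg.rowSum_anti p (Nat.zero_le l))).trans hw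

include hh in
lemma colSum_le_height (hj : j ≤ p - 1) (hl : l ≤ L) : colSum a j l ≤ R.h :=
  ((hg.colSum_mono j hl).trans (hg.colSum_mono_column L hj)).trans hh

include hw hh in
lemma rect_nonneg {P : Piece} (hP : P.Valid p L) :
    0 ≤ (P.rect a p L R).w ∧ 0 ≤ (P.rect a p L R).h := by
  cases P with
  | square j l => exact ⟨hg.nonneg j l, hg.nonneg j l⟩
  | crack j l =>
    exact ⟨sub_nonneg.mpr (hg.rowSum_anti _ l.le_succ),
      sub_nonneg.mpr (hg.colSum_mono_column _ j.le_succ)⟩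
  | right l => exact ⟨sub_nonneg.mpr (hg.rowSum_le_width R hw le_rfl), hg.nonneg _ _⟩
  | top j =>
    exact ⟨hg.nonneg _ _, sub_nonneg.mpr (hg.colSum_le_height R hh
      (Nat.le_sub_one_of_lt hP) le_rfl)⟩
  | corner => exact ⟨sub_nonneg.mpr (hg.rowSum_le_width R hw le_rfl), sub_nonneg.mpr hh⟩

include hw hh in
lemma rect_box_subset {P : Piece} (hP : P.Valid p L) : (P.rect a p L R).box ⊆ R.box := by
  cases P with
  | square j l =>
    have hx := hg.rowSum_le_width R hw (l := l) hP.1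
    have hy := hg.colSum_le_height R hh (j := j) (Nat.le_sub_one_of_lt hP.1) hP.2
    rw [rowSum_succ] at hx
    rw [colSum_succ] at hy
    refine Rect.box_subset_box ?_ ?_ ?_ ?_ <;> dsimp only [rect] <;>
      linarith [hg.rowSum_nonneg j l, hg.colSum_nonneg j l]
  | crack j l =>
    have hx := hg.rowSum_le_width R hw (l := l) hP.1.le
    have hy := hg.colSum_le_height R hh (j := j + 1) (Nat.le_sub_one_of_lt hP.1) hP.2
    refine Rect.box_subset_box ?_ ?_ ?_ ?_ <;> dsimp only [rect] <;>
      linarith [hg.rowSum_nonneg (j + 1) (l + 1), hg.colSum_nonneg j (l + 1)]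
  | right l =>
    have hy := hg.colSum_le_height R hh (j := p - 1) le_rfl hP
    rw [colSum_succ] at hy
    refine Rect.box_subset_box ?_ ?_ ?_ ?_ <;> dsimp only [rect] <;>
      linarith [hg.rowSum_nonneg p l, hg.colSum_nonneg (p - 1) l]
  | top j =>
    have hx := hg.rowSum_le_width R hw (l := L) hP
    rw [rowSum_succ] at hx
    refine Rect.box_subset_box ?_ ?_ ?_ ?_ <;> dsimp only [rect] <;>
      linarith [hg.rowSum_nonneg j L, hg.colSum_nonneg j L]
  | corner =>
    refine Rect.box_subset_box ?_ ?_ ?_ ?_ <;> dsimp only [rect] <;>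
      linarith [hg.rowSum_nonneg p L, hg.colSum_nonneg (p - 1) L]

end IsDriftGrid

namespace Piece

variable {p L : ℕ}

def leftovers (p L : ℕ) : Finset Piece :=
  ((range (p - 1) ×ˢ range L).image fun q => crack q.1 q.2) ∪ (range L).image right ∪
    (range p).image top ∪ {corner}

lemma mem_leftovers {P : Piece} :
    P ∈ leftovers p L ↔ P.Valid p L ∧ ∀ j l, P ≠ square j l := by
  cases P <;> simp [leftovers, Valid]; omega

lemma sum_leftovers_le (f : Piece → ℝ) {c₁ c₂ : ℝ}
    (hcrack : ∀ j l, j + 1 < p → l < L → f (crack j l) ≤ c₁)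
    (hright : ∀ l < L, f (right l) ≤ c₂) (htop : ∀ j < p, f (top j) ≤ c₂)
    (hcorner : f corner ≤ c₂) :
    ∑ P ∈ leftovers p L, f P ≤ (p - 1 : ℕ) * L * c₁ + (L + p + 1) * c₂ := by
  rw [leftovers, sum_union (by simp), sum_union (by simp [Finset.disjoint_left]; grind),
    sum_union (by simp [Finset.disjoint_left]; grind), sum_image (by simp), sum_image (by simp),
    sum_image (by simp), sum_singleton]
  have h₁ := (range (p - 1) ×ˢ range L).sum_le_card_nsmul (fun q => f (crack q.1 q.2)) c₁
    fun q hq => by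
      rw [mem_product, Finset.mem_range, Finset.mem_range] at hq; exact hcrack _ _ (by omega) hq.2
  have h₂ := (range L).sum_le_card_nsmul _ c₂ fun l hl => hright l (mem_range.mp hl)
  have h₃ := (range p).sum_le_card_nsmul _ c₂ fun j hj => htop j (mem_range.mp hj)
  simp only [card_product, card_range, nsmul_eq_mul, Nat.cast_mul] at h₁ h₂ h₃
  linarith

end Piece

section NearlyConstant

variable {a : ℕ → ℕ → ℝ} {p L : ℕ} {s ε : ℝ} {j j' l l' : ℕ}
  (hnear : ∀ j l, l ≤ L → s - ε ≤ a j l ∧ a j l ≤ s)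
include hnear

lemma eps_nonneg_of_near : 0 ≤ ε := by linarith [hnear 0 0 (Nat.zero_le L)]

lemma rowSum_le_of_near (hl : l ≤ L) : rowSum a j l ≤ j * s := by
  simpa [rowSum] using (range j).sum_le_card_nsmul _ _ fun i _ => (hnear i l hl).2

lemma le_rowSum_of_near (hl : l ≤ L) : j * (s - ε) ≤ rowSum a j l := by
  simpa [rowSum] using (range j).card_nsmul_le_sum _ _ fun i _ => (hnear i l hl).1

lemma colSum_le_of_near (hl : l ≤ L) : colSum a j l ≤ l * s := by
  simpa [colSum] using (range l).sum_le_card_nsmul _ _ fun i hi =>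
    (hnear j i (hl.trans' (mem_range.mp hi).le)).2

lemma le_colSum_of_near (hl : l ≤ L) : l * (s - ε) ≤ colSum a j l := by
  simpa [colSum] using (range l).card_nsmul_le_sum _ _ fun i hi =>
    (hnear j i (hl.trans' (mem_range.mp hi).le)).1

lemma rowSum_sub_rowSum_le_of_near (hl : l ≤ L) (hl' : l' ≤ L) :
    rowSum a j l - rowSum a j l' ≤ j * ε := by
  rw [rowSum, rowSum, ← sum_sub_distrib]
  have := (range j).sum_le_card_nsmul (fun i => a i l - a i l') ε fun i _ => by
    linarith [(hnear i l hl).2, (hnear i l' hl').1]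
  simpa using this

lemma colSum_sub_colSum_le_of_near (hl : l ≤ L) :
    colSum a j l - colSum a j' l ≤ l * ε := by
  rw [colSum, colSum, ← sum_sub_distrib]
  have := (range l).sum_le_card_nsmul (fun i => a j i - a j' i) ε fun i hi => by
    have hi : i ≤ L := hl.trans' (mem_range.mp hi).le
    linarith [(hnear j i hi).2, (hnear j' i hi).1]
  simpa using this

lemma isDriftGrid_of_near (h0 : ∀ j l, 0 ≤ a j l) (hanti : ∀ j, Antitone (a j))
    (hmono : ∀ l, Monotone (a · l)) (hε : (L + 1) * ε ≤ s) : IsDriftGrid a p L where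
  nonneg := h0
  antitone_level := hanti
  monotone_column := hmono
  colSum_succ_le j l _ hl := by
    have hdiff := colSum_sub_colSum_le_of_near (j := j + 1) (j' := j) hnear hl.le
    have hlε : ((l : ℝ) + 1) * ε ≤ (L + 1) * ε :=
      mul_le_mul_of_nonneg_right (by exact_mod_cast Nat.succ_le_succ hl.le)
        (eps_nonneg_of_near hnear)
    rw [colSum_succ]
    linarith [(hnear j l hl.le).1]

variable (R : Rect)

lemma rect_w_le_of_near (hwR : R.w ≤ (p + 1) * s) (hpε : p * ε ≤ s) {P : Piece}
    (hP : P.Valid p L) : (P.rect a p L R).w ≤ 2 * s := by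
  have hε := eps_nonneg_of_near hnear
  have hs : 0 ≤ s := (mul_nonneg p.cast_nonneg hε).trans hpε
  have hright : ∀ l ≤ L, R.w - rowSum a p l ≤ 2 * s := fun l hl => by
    linarith [le_rowSum_of_near (j := p) hnear hl]
  cases P with
  | square j l => exact (hnear j l hP.2.le).2.trans (by linarith)
  | crack j l =>
    have hcrack := rowSum_sub_rowSum_le_of_near (j := j + 1) hnear hP.2.le hP.2
    have hjp : ((j + 1 : ℕ) : ℝ) * ε ≤ p * ε :=
      mul_le_mul_of_nonneg_right (by exact_mod_cast hP.1.le) hε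
    simp only [rect]
    linarith
  | right l => exact hright l hP.le
  | top j => exact (hnear j L le_rfl).2.trans (by linarith)
  | corner => exact hright L le_rfl

lemma rect_h_le_of_near (hhR : R.h ≤ (L + 1) * s) (hLε : L * ε ≤ s) {P : Piece}
    (hP : P.Valid p L) : (P.rect a p L R).h ≤ 2 * s := by
  have hε := eps_nonneg_of_near hnear
  have hs : 0 ≤ s := (mul_nonneg L.cast_nonneg hε).trans hLε
  have htop : ∀ j, R.h - colSum a j L ≤ 2 * s := fun j => by
    linarith [le_colSum_of_near (j := j) (l := L) hnear le_rfl]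
  cases P with
  | square j l => exact (hnear j l hP.2.le).2.trans (by linarith)
  | crack j l =>
    have hcrack := colSum_sub_colSum_le_of_near (j := j + 1) (j' := j) hnear hP.2
    have hlL : ((l + 1 : ℕ) : ℝ) * ε ≤ L * ε :=
      mul_le_mul_of_nonneg_right (by exact_mod_cast hP.2) hε
    simp only [rect]
    linarith
  | right l => exact (hnear _ l hP.le).2.trans (by linarith)
  | top j => exact htop j
  | corner => exact htop _

lemma perimeter_crack_le_of_near {j l : ℕ} (hj : j + 1 < p) (hl : l < L) :
    2 * (((crack j l).rect a p L R).w + ((crack j l).rect a p L R).h) ≤ 2 * ((p + L) * ε) := by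
  have hε := eps_nonneg_of_near hnear
  have hw := rowSum_sub_rowSum_le_of_near (j := j + 1) hnear hl.le hl
  have hh := colSum_sub_colSum_le_of_near (j := j + 1) (j' := j) hnear hl
  have hjp : ((j + 1 : ℕ) : ℝ) * ε ≤ p * ε :=
    mul_le_mul_of_nonneg_right (by exact_mod_cast hj.le) hε
  have hlL : ((l + 1 : ℕ) : ℝ) * ε ≤ L * ε := mul_le_mul_of_nonneg_right (by exact_mod_cast hl) hε
  simp only [rect]
  linarith

lemma sum_perimeter_leftovers_le_of_near (hwR : R.w ≤ (p + 1) * s) (hhR : R.h ≤ (L + 1) * s)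
    (hpε : p * ε ≤ s) (hLε : L * ε ≤ s) (hcracks : 2 * p * L * (p + L) * ε ≤ s) :
    ∑ P ∈ leftovers p L, 2 * ((P.rect a p L R).w + (P.rect a p L R).h) ≤
      (9 + 8 * (p + L)) * s := by
  have hother : ∀ P : Piece, P.Valid p L →
      2 * ((P.rect a p L R).w + (P.rect a p L R).h) ≤ 8 * s := fun P hP => by
    linarith [rect_w_le_of_near hnear R hwR hpε hP, rect_h_le_of_near hnear R hhR hLε hP]
  refine (sum_leftovers_le _ (fun j l hj hl => perimeter_crack_le_of_near hnear R hj hl)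
    (fun l hl => hother (right l) hl) (fun j hj => hother (top j) hj)
    (hother corner trivial)).trans ?_
  have hp1 : ((p - 1 : ℕ) : ℝ) * L * (2 * ((p + L) * ε)) ≤ p * L * (2 * ((p + L) * ε)) :=
    mul_le_mul_of_nonneg_right (mul_le_mul_of_nonneg_right (by exact_mod_cast Nat.sub_le p 1)
      L.cast_nonneg) (by have := eps_nonneg_of_near hnear; positivity)
  linarith

end NearlyConstant


lemma rpow_neg_sub_rpow_neg_add_le {t x d : ℝ} (ht₀ : 0 ≤ t) (ht₁ : t ≤ 1) (hx : 0 < x)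
    (hd : 0 ≤ d) : x ^ (-t) - (x + d) ^ (-t) ≤ d * x ^ (-t) / x := by
  have hxd : 0 < x + d := by linarith
  have hanti : (x + d) ^ (-t) ≤ x ^ (-t) :=
    Real.rpow_le_rpow_of_nonpos hx (by linarith) (by linarith)
  have hmono : x * x ^ (-t) ≤ (x + d) * (x + d) ^ (-t) := by
    have := Real.rpow_le_rpow hx.le (le_add_of_nonneg_right hd) (by linarith : 0 ≤ 1 - t)
    rwa [sub_eq_add_neg, Real.rpow_add hx, Real.rpow_add hxd, Real.rpow_one, Real.rpow_one] at this
  rw [le_div_iff₀ hx]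
  nlinarith

section PowerGrid

variable {t : ℝ} {n₀ p L : ℕ}

def gridIndex (n₀ p L j l : ℕ) : ℕ := n₀ + (p - 1 - j) * L + l

/-- The sides decrease up each column and increase from left to right, as `IsDriftGrid` wants. -/
noncomputable def powerGrid (t : ℝ) (n₀ p L : ℕ) (j l : ℕ) : ℝ :=
  (gridIndex n₀ p L j l : ℝ) ^ (-t)

def gridSquare (n₀ p L n : ℕ) : Piece := .square (p - 1 - (n - n₀) / L) ((n - n₀) % L)

lemma gridIndex_add_le (hp : 0 < p) {j l : ℕ} : gridIndex n₀ p L j l + L ≤ n₀ + p * L + l := by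
  have : (p - 1 - j) * L ≤ (p - 1) * L := Nat.mul_le_mul_right L (Nat.sub_le _ _)
  have : (p - 1) * L + L = p * L := by
    rw [← Nat.succ_mul, Nat.succ_eq_add_one, Nat.sub_add_cancel hp]
  unfold gridIndex; omega

lemma gridIndex_gridSquare {n : ℕ} (h₁ : n₀ ≤ n) (h₂ : n < n₀ + p * L) :
    gridIndex n₀ p L (p - 1 - (n - n₀) / L) ((n - n₀) % L) = n := by
  have hq : (n - n₀) / L < p := Nat.div_lt_of_lt_mul (by rw [mul_comm]; omega)
  have hdm := Nat.div_add_mod (n - n₀) L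
  rw [gridIndex, Nat.sub_sub_self (by omega : (n - n₀) / L ≤ p - 1), mul_comm]
  omega

lemma gridSquare_gridIndex {j l : ℕ} (hj : j < p) (hl : l < L) :
    gridSquare n₀ p L (gridIndex n₀ p L j l) = .square j l := by
  have hL : 0 < L := by omega
  have hsub : gridIndex n₀ p L j l - n₀ = l + L * (p - 1 - j) := by
    unfold gridIndex; rw [mul_comm]; omega
  rw [gridSquare, hsub, Nat.add_mul_div_left _ _ hL, Nat.add_mul_mod_self_left,
    Nat.div_eq_of_lt hl, Nat.mod_eq_of_lt hl, zero_add, Nat.sub_sub_self (by omega)]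

variable (ht₀ : 0 ≤ t) (hn₀ : 0 < n₀)
include ht₀ hn₀

lemma rpow_neg_le_rpow_neg {m n : ℕ} (hm : n₀ ≤ m) (hmn : m ≤ n) :
    (n : ℝ) ^ (-t) ≤ (m : ℝ) ^ (-t) :=
  Real.rpow_le_rpow_of_nonpos (by exact_mod_cast hn₀.trans_le hm) (by exact_mod_cast hmn)
    (by linarith)

lemma powerGrid_near (ht₁ : t ≤ 1) (hp : 0 < p) (j l : ℕ) (hl : l ≤ L) :
    (n₀ : ℝ) ^ (-t) - p * L * (n₀ : ℝ) ^ (-t) / n₀ ≤ powerGrid t n₀ p L j l ∧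
      powerGrid t n₀ p L j l ≤ (n₀ : ℝ) ^ (-t) := by
  have hidx : n₀ ≤ gridIndex n₀ p L j l := by unfold gridIndex; omega
  refine ⟨?_, rpow_neg_le_rpow_neg ht₀ hn₀ le_rfl hidx⟩
  have hmax : gridIndex n₀ p L j l ≤ n₀ + p * L := by
    have := gridIndex_add_le (n₀ := n₀) (L := L) (j := j) (l := l) hp; omega
  have hlow := rpow_neg_le_rpow_neg ht₀ hn₀ hidx hmax
  have hstep := rpow_neg_sub_rpow_neg_add_le ht₀ ht₁ (Nat.cast_pos.mpr hn₀)
    (by positivity : (0 : ℝ) ≤ p * L)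
  push_cast at hlow
  rw [powerGrid]
  linarith

lemma isDriftGrid_powerGrid (ht₁ : t ≤ 1) (hp : 0 < p) (hsmall : (L + 1) * (p * L) ≤ n₀) :
    IsDriftGrid (powerGrid t n₀ p L) p L := by
  refine isDriftGrid_of_near (powerGrid_near ht₀ hn₀ ht₁ hp)
    (fun _ _ => Real.rpow_nonneg (Nat.cast_nonneg _) _)
    (fun j l l' hll' => rpow_neg_le_rpow_neg ht₀ hn₀ (by unfold gridIndex; omega)
      (by unfold gridIndex; omega))
    (fun l j j' hjj' => rpow_neg_le_rpow_neg ht₀ hn₀ (by unfold gridIndex; omega)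
      (by unfold gridIndex; gcongr)) ?_
  have hs : 0 ≤ (n₀ : ℝ) ^ (-t) := by positivity
  have hcast : ((L : ℝ) + 1) * (p * L) ≤ n₀ := by exact_mod_cast hsmall
  rw [mul_div_assoc', div_le_iff₀ (Nat.cast_pos.mpr hn₀)]
  nlinarith

end PowerGrid

def PerfectPacking (t : ℝ) (n₀ n₀' : ℕ) (X Y w h b B : ℝ) : Prop :=
  ∃ (pos : ℕ → ℝ × ℝ) (k : ℕ) (rx ry rw rh : Fin k → ℝ),
    (∀ i, 0 ≤ rw i) ∧ (∀ i, 0 ≤ rh i) ∧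
    (∀ n : ℕ, n₀ ≤ n → n < n₀' →
      Box (pos n).1 (pos n).2 ((n : ℝ) ^ (-t)) ((n : ℝ) ^ (-t)) ⊆ Box X Y w h) ∧
    (∀ i, Box (rx i) (ry i) (rw i) (rh i) ⊆ Box X Y w h) ∧
    (∀ m n : ℕ, n₀ ≤ m → m < n₀' → n₀ ≤ n → n < n₀' → m ≠ n →
      Disjoint
        (interior (Box (pos m).1 (pos m).2 ((m : ℝ) ^ (-t)) ((m : ℝ) ^ (-t))))
        (interior (Box (pos n).1 (pos n).2 ((n : ℝ) ^ (-t)) ((n : ℝ) ^ (-t))))) ∧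
    (∀ i j : Fin k, i ≠ j →
      Disjoint (interior (Box (rx i) (ry i) (rw i) (rh i)))
        (interior (Box (rx j) (ry j) (rw j) (rh j)))) ∧
    (∀ (n : ℕ) (i : Fin k), n₀ ≤ n → n < n₀' →
      Disjoint
        (interior (Box (pos n).1 (pos n).2 ((n : ℝ) ^ (-t)) ((n : ℝ) ^ (-t))))
        (interior (Box (rx i) (ry i) (rw i) (rh i)))) ∧
    volume (Box X Y w h \
      ((⋃ n ∈ Finset.Ico n₀ n₀',
          Box (pos n).1 (pos n).2 ((n : ℝ) ^ (-t)) ((n : ℝ) ^ (-t))) ∪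
       ⋃ i, Box (rx i) (ry i) (rw i) (rh i))) = 0 ∧
    (∀ i, min (rw i) (rh i) ≤ b) ∧
    (∑ i, 2 * (rw i + rh i) ≤ B)

lemma PerfectPacking.mono {t : ℝ} {n₀ n₀' : ℕ} {X Y w h b B b' B' : ℝ}
    (hP : PerfectPacking t n₀ n₀' X Y w h b B) (hb : b ≤ b') (hB : B ≤ B') :
    PerfectPacking t n₀ n₀' X Y w h b' B' := by
  obtain ⟨pos, k, rx, ry, rw, rh, h₁, h₂, h₃, h₄, h₅, h₆, h₇, h₈, h₉, h₁₀⟩ := hP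
  exact ⟨pos, k, rx, ry, rw, rh, h₁, h₂, h₃, h₄, h₅, h₆, h₇, h₈, fun i => (h₉ i).trans hb,
    h₁₀.trans hB⟩

namespace IsDriftGrid

variable {a : ℕ → ℕ → ℝ} {p L : ℕ} (hg : IsDriftGrid a p L)
include hg

theorem perfectPacking {t : ℝ} {n₀ n₀' : ℕ} (hp : 0 < p) {X Y w h : ℝ}
    (hw : rowSum a p 0 ≤ w) (hh : colSum a (p - 1) L ≤ h) (σ : ℕ → Piece)
    (hσ : ∀ n, n₀ ≤ n → n < n₀' →
      ∃ j l, j < p ∧ l < L ∧ σ n = .square j l ∧ a j l = (n : ℝ) ^ (-t))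
    (hσ_inj : ∀ m n, n₀ ≤ m → m < n₀' → n₀ ≤ n → n < n₀' → σ m = σ n → m = n)
    (hσ_surj : ∀ j < p, ∀ l < L, ∃ n, n₀ ≤ n ∧ n < n₀' ∧ σ n = .square j l) {b B : ℝ}
    (hb : ∀ P ∈ leftovers p L,
      min (P.rect a p L ⟨X, Y, w, h⟩).w (P.rect a p L ⟨X, Y, w, h⟩).h ≤ b)
    (hB : ∑ P ∈ leftovers p L,
      2 * ((P.rect a p L ⟨X, Y, w, h⟩).w + (P.rect a p L ⟨X, Y, w, h⟩).h) ≤ B) :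
    PerfectPacking t n₀ n₀' X Y w h b B := by
  set R : Rect := ⟨X, Y, w, h⟩
  choose! col lev hcol hlev hσeq hside using hσ
  have hsq : ∀ n, n₀ ≤ n → n < n₀' → Box ((σ n).rect a p L R).x ((σ n).rect a p L R).y
      ((n : ℝ) ^ (-t)) ((n : ℝ) ^ (-t)) = ((σ n).rect a p L R).box := fun n h₁ h₂ => by
    rw [hσeq n h₁ h₂, ← hside n h₁ h₂]; rfl
  have hvalid : ∀ n, n₀ ≤ n → n < n₀' → (σ n).Valid p L := fun n h₁ h₂ => by
    rw [hσeq n h₁ h₂]; exact ⟨hcol n h₁ h₂, hlev n h₁ h₂⟩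
  set e := (leftovers p L).equivFin
  have hleft (i) : (e.symm i : Piece).Valid p L ∧ ∀ j l, (e.symm i : Piece) ≠ .square j l :=
    mem_leftovers.mp (e.symm i).2
  refine ⟨fun n => (((σ n).rect a p L R).x, ((σ n).rect a p L R).y), _,
    fun i => ((e.symm i : Piece).rect a p L R).x, fun i => ((e.symm i : Piece).rect a p L R).y,
    fun i => ((e.symm i : Piece).rect a p L R).w, fun i => ((e.symm i : Piece).rect a p L R).h,
    fun i => (hg.rect_nonneg R hw hh (hleft i).1).1,
    fun i => (hg.rect_nonneg R hw hh (hleft i).1).2,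
    fun n h₁ h₂ => hsq n h₁ h₂ ▸ hg.rect_box_subset R hw hh (hvalid n h₁ h₂),
    fun i => hg.rect_box_subset R hw hh (hleft i).1,
    fun m n hm₁ hm₂ hn₁ hn₂ hmn => ?_, fun i j hij => ?_, fun n i hn₁ hn₂ => ?_, ?_,
    fun i => hb _ (e.symm i).2, ?_⟩
  · rw [hsq m hm₁ hm₂, hsq n hn₁ hn₂]
    exact hg.disjoint_interior_rect R hp (hvalid m hm₁ hm₂) (hvalid n hn₁ hn₂)
      fun h => hmn (hσ_inj m n hm₁ hm₂ hn₁ hn₂ h)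
  · exact hg.disjoint_interior_rect R hp (hleft i).1 (hleft j).1
      fun h => hij (e.symm.injective (Subtype.ext h))
  · rw [hsq n hn₁ hn₂]
    exact hg.disjoint_interior_rect R hp (hvalid n hn₁ hn₂) (hleft i).1
      fun h => (hleft i).2 _ _ (h.symm.trans (hσeq n hn₁ hn₂))
  · refine measure_mono_null (sdiff_subset_iff.mpr fun z hz => ?_) measure_empty
    obtain ⟨P, hP, hzP⟩ := hg.exists_valid_mem_rect R hp hz
    by_cases hP_sq : ∃ j l, P = .square j l
    · obtain ⟨j, l, rfl⟩ := hP_sq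
      obtain ⟨n, hn₁, hn₂, hσn⟩ := hσ_surj j hP.1 l hP.2
      refine Or.inl (Or.inl (mem_biUnion (Finset.mem_Ico.mpr ⟨hn₁, hn₂⟩) ?_))
      rw [hsq n hn₁ hn₂, hσn]; exact hzP
    · push Not at hP_sq
      refine Or.inl (Or.inr (mem_iUnion.mpr ⟨e ⟨P, mem_leftovers.mpr ⟨hP, hP_sq⟩⟩, ?_⟩))
      simp only [Equiv.symm_apply_apply]
      exact hzP
  · refine le_trans (le_of_eq ?_) hB
    exact (e.symm.sum_comp fun P => 2 * (((P : Piece).rect a p L R).w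
      + ((P : Piece).rect a p L R).h)).trans
      (sum_coe_sort (leftovers p L) fun P => 2 * ((P.rect a p L R).w + (P.rect a p L R).h))

end IsDriftGrid

theorem perfectPacking_powerGrid {t : ℝ} {n₀ p L : ℕ} (ht₀ : 0 ≤ t) (ht₁ : t ≤ 1) (hn₀ : 0 < n₀)
    (hp : 0 < p) (hL : 0 < L) (hsmall : 2 * p ^ 2 * L ^ 2 * (p + L) ≤ n₀) {X Y w h : ℝ}
    (hpw : p * (n₀ : ℝ) ^ (-t) ≤ w) (hwp : w ≤ (p + 1) * (n₀ : ℝ) ^ (-t))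
    (hLh : L * (n₀ : ℝ) ^ (-t) ≤ h) (hhL : h ≤ (L + 1) * (n₀ : ℝ) ^ (-t)) :
    PerfectPacking t n₀ (n₀ + p * L) X Y w h (2 * (n₀ : ℝ) ^ (-t))
      ((9 + 8 * (p + L)) * (n₀ : ℝ) ^ (-t)) := by
  set s := (n₀ : ℝ) ^ (-t)
  have hnear := powerGrid_near (L := L) ht₀ hn₀ ht₁ hp
  have hε : ∀ c : ℕ, c * (p * L) ≤ n₀ → (c : ℝ) * (p * L * s / n₀) ≤ s := fun c hc => by
    have hc' : (c : ℝ) * (p * L) ≤ n₀ := by exact_mod_cast hc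
    rw [mul_div_assoc', div_le_iff₀ (Nat.cast_pos.mpr hn₀)]
    nlinarith [Real.rpow_nonneg (Nat.cast_nonneg n₀) (-t)]
  have hpL : 1 ≤ p * L := Nat.one_le_iff_ne_zero.mpr (by positivity)
  have hsmall' : ∀ c ≤ 2 * p * L * (p + L), c * (p * L) ≤ n₀ := fun c hc =>
    (Nat.mul_le_mul_right _ hc).trans (by nlinarith)
  have hg := isDriftGrid_powerGrid ht₀ hn₀ ht₁ hp (hsmall' _ (by nlinarith))
  have hpε := hε p (hsmall' _ (by nlinarith))
  have hLε := hε L (hsmall' _ (by nlinarith))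
  set R : Rect := ⟨X, Y, w, h⟩
  refine hg.perfectPacking hp ((rowSum_le_of_near hnear (Nat.zero_le L)).trans hpw)
    ((colSum_le_of_near hnear le_rfl).trans hLh) (gridSquare n₀ p L) (fun n h₁ h₂ => ?_)
    (fun m n hm₁ hm₂ hn₁ hn₂ hmn => ?_) (fun j hj l hl => ?_) (fun P hP => ?_) ?_
  · refine ⟨p - 1 - (n - n₀) / L, (n - n₀) % L,
      (Nat.sub_le _ _).trans_lt (Nat.sub_one_lt_of_lt hp), Nat.mod_lt _ hL, rfl, ?_⟩
    rw [powerGrid, gridIndex_gridSquare h₁ h₂]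
  · obtain ⟨hj, hl⟩ := Piece.square.inj hmn
    rw [← gridIndex_gridSquare (p := p) (L := L) hm₁ hm₂, ← gridIndex_gridSquare hn₁ hn₂, hj, hl]
  · have := gridIndex_add_le (n₀ := n₀) (L := L) (j := j) (l := l) (Nat.zero_lt_of_lt hj)
    exact ⟨_, by unfold gridIndex; omega, by omega, gridSquare_gridIndex hj hl⟩
  · exact (min_le_left _ _).trans
      (rect_w_le_of_near hnear R hwp hpε (mem_leftovers.mp hP).1)
  · have hcracks := hε (2 * p * L * (p + L)) (hsmall' _ le_rfl)
    push_cast at hcracks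
    exact sum_perimeter_leftovers_le_of_near hnear R hwp hhL hpε hLε hcracks

lemma exists_nat_mul_le_le_succ_mul {s x : ℝ} {M : ℕ} (hs : 0 < s) (h₁ : M * s ≤ x)
    (h₂ : x ≤ 3 * M * s) : ∃ p : ℕ, M ≤ p ∧ p ≤ 3 * M ∧ p * s ≤ x ∧ x ≤ (p + 1) * s := by
  have hx : 0 ≤ x / s := div_nonneg ((mul_nonneg M.cast_nonneg hs.le).trans h₁) hs.le
  refine ⟨⌊x / s⌋₊, Nat.le_floor ((le_div_iff₀ hs).mpr h₁), ?_, ?_, ?_⟩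
  · exact_mod_cast (Nat.floor_le hx).trans ((div_le_iff₀ hs).mpr h₂)
  · exact (le_div_iff₀ hs).mp (Nat.floor_le hx)
  · exact ((div_le_iff₀ hs).mp (Nat.lt_floor_add_one (x / s)).le)

end SquarePacking

open SquarePacking

/-- Efficiently packing a small rectangle of bounded eccentricity: for `1/2 < t < 1`
there is a constant `C > 0` such that for all `M ≥ C` there is `N₀` so that for all
`n₀ ≥ N₀` and any rectangle `R` with `M n₀^{-t} ≤ w(R) ≤ h(R) ≤ 3M n₀^{-t}`, one can
perfectly pack `R` by the squares of sidelength `n^{-t}` for `n₀ ≤ n < n₀'`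
(with `n₀ + M²/C ≤ n₀' ≤ n₀ + C M²`) together with a finite family of leftover
rectangles of widths at most `C n₀^{-t}` and total perimeter at most `C M n₀^{-t}`. -/
theorem efficient_packing_bounded_eccentricity (t : ℝ) (ht1 : 1 / 2 < t) (ht2 : t < 1) :
    ∃ C : ℝ, 0 < C ∧
      ∀ M : ℕ, C ≤ (M : ℝ) →
      ∃ N₀ : ℕ, ∀ n₀ : ℕ, N₀ ≤ n₀ →
      ∀ X Y w h : ℝ,
        (M : ℝ) * (n₀ : ℝ) ^ (-t) ≤ w → w ≤ h → h ≤ 3 * (M : ℝ) * (n₀ : ℝ) ^ (-t) →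
        ∃ n₀' : ℕ,
          (n₀ : ℝ) + (M : ℝ) ^ 2 / C ≤ (n₀' : ℝ) ∧
          (n₀' : ℝ) ≤ (n₀ : ℝ) + C * (M : ℝ) ^ 2 ∧
          ∃ (pos : ℕ → ℝ × ℝ) (k : ℕ) (rx ry rw rh : Fin k → ℝ),
            (∀ i, 0 ≤ rw i) ∧ (∀ i, 0 ≤ rh i) ∧
            -- the squares lie in R
            (∀ n : ℕ, n₀ ≤ n → n < n₀' →
              Box (pos n).1 (pos n).2 ((n : ℝ) ^ (-t)) ((n : ℝ) ^ (-t)) ⊆ Box X Y w h) ∧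
            -- the leftover rectangles lie in R
            (∀ i, Box (rx i) (ry i) (rw i) (rh i) ⊆ Box X Y w h) ∧
            -- the squares have pairwise disjoint interiors
            (∀ m n : ℕ, n₀ ≤ m → m < n₀' → n₀ ≤ n → n < n₀' → m ≠ n →
              Disjoint
                (interior (Box (pos m).1 (pos m).2 ((m : ℝ) ^ (-t)) ((m : ℝ) ^ (-t))))
                (interior (Box (pos n).1 (pos n).2 ((n : ℝ) ^ (-t)) ((n : ℝ) ^ (-t))))) ∧
            -- the leftover rectangles have pairwise disjoint interiors
            (∀ i j : Fin k, i ≠ j →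
              Disjoint (interior (Box (rx i) (ry i) (rw i) (rh i)))
                (interior (Box (rx j) (ry j) (rw j) (rh j)))) ∧
            -- squares and leftover rectangles have disjoint interiors
            (∀ (n : ℕ) (i : Fin k), n₀ ≤ n → n < n₀' →
              Disjoint
                (interior (Box (pos n).1 (pos n).2 ((n : ℝ) ^ (-t)) ((n : ℝ) ^ (-t))))
                (interior (Box (rx i) (ry i) (rw i) (rh i)))) ∧
            -- together they cover R up to a null set
            volume (Box X Y w h \
              ((⋃ n ∈ Finset.Ico n₀ n₀',
                  Box (pos n).1 (pos n).2 ((n : ℝ) ^ (-t)) ((n : ℝ) ^ (-t))) ∪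
               ⋃ i, Box (rx i) (ry i) (rw i) (rh i))) = 0 ∧
            -- width bound on leftover rectangles
            (∀ i, min (rw i) (rh i) ≤ C * (n₀ : ℝ) ^ (-t)) ∧
            -- total perimeter bound on leftover rectangles
            (∑ i, 2 * (rw i + rh i) ≤ C * (M : ℝ) * (n₀ : ℝ) ^ (-t)) := by
  refine ⟨100, by norm_num, fun M hM => ⟨972 * M ^ 5, fun n₀ hn₀ X Y w h hw hwh hh => ?_⟩⟩
  have hM : 1 ≤ M := by exact_mod_cast (by linarith : (1 : ℝ) ≤ M)
  have hn₀pos : 0 < n₀ := lt_of_lt_of_le (by positivity) hn₀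
  have hs : 0 < (n₀ : ℝ) ^ (-t) := Real.rpow_pos_of_pos (Nat.cast_pos.mpr hn₀pos) _
  obtain ⟨p, hMp, hp3M, hpw, hwp⟩ := exists_nat_mul_le_le_succ_mul hs hw (hwh.trans hh)
  obtain ⟨L, hML, hL3M, hLh, hhL⟩ := exists_nat_mul_le_le_succ_mul hs (hw.trans hwh) hh
  have hsmall : 2 * p ^ 2 * L ^ 2 * (p + L) ≤ n₀ := calc
    _ ≤ 2 * (3 * M) ^ 2 * (3 * M) ^ 2 * (3 * M + 3 * M) := by gcongr
    _ = 972 * M ^ 5 := by ring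
    _ ≤ n₀ := hn₀
  have hpL : (M : ℝ) ^ 2 ≤ p * L := by rw [sq]; exact_mod_cast Nat.mul_le_mul hMp hML
  have hpL' : (p : ℝ) * L ≤ 9 * M ^ 2 := by
    exact_mod_cast (Nat.mul_le_mul hp3M hL3M).trans_eq (by ring)
  have hp3M' : (p : ℝ) ≤ 3 * M := by exact_mod_cast hp3M
  have hL3M' : (L : ℝ) ≤ 3 * M := by exact_mod_cast hL3M
  refine ⟨n₀ + p * L, by push_cast; nlinarith, by push_cast; nlinarith,
    (perfectPacking_powerGrid (by linarith) ht2.le hn₀pos (by omega) (by omega) hsmall hpw hwp hLh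
      hhL).mono (by nlinarith) (by nlinarith)⟩
end

section
/- Let 0 < t < 1, let n₀, M₁, M₂ be natural numbers with n₀ ≥ 1, M₁ ≥ 1, M₂ ≥ 1, let w be a real number, and for 0 ≤ i < M₁ and 0 ≤ j < M₂ define n_{i,j} := n₀ + j·M₁ + i, x_{i,j} := w − ∑_{i'=i}^{M₁−1} n_{i',j}^{-t}, and y_{i,j} := ∑_{j'=0}^{j−1} n_{i,j'}^{-t}. Then for all 0 ≤ i < M₁ and 0 ≤ j < M₂ one has |x_{i,j} − (w − (M₁ − i)·n₀^{-t})| ≤ t·M₁²·M₂·n₀^{-t-1} and |y_{i,j} − j·n₀^{-t}| ≤ t·M₁·M₂²·n₀^{-t-1}. -/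
open Finset

/-- The lexicographic index `n_{i,j} = n₀ + j M₁ + i`. -/
def nij (n₀ M₁ i j : ℕ) : ℕ := n₀ + j * M₁ + i

/-- The abscissa `x_{i,j} = w - ∑_{i'=i}^{M₁-1} n_{i',j}^{-t}`. -/
noncomputable def xij (t w : ℝ) (n₀ M₁ i j : ℕ) : ℝ :=
  w - ∑ i' ∈ Finset.Ico i M₁, ((nij n₀ M₁ i' j : ℕ) : ℝ) ^ (-t)

/-- The ordinate `y_{i,j} = ∑_{j'=0}^{j-1} n_{i,j'}^{-t}`. -/
noncomputable def yij (t : ℝ) (n₀ M₁ i j : ℕ) : ℝ :=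
  ∑ j' ∈ Finset.range j, ((nij n₀ M₁ i j' : ℕ) : ℝ) ^ (-t)

/-! The map `x ↦ x ^ (-t)` is decreasing with derivative `-t x ^ (-t - 1)`, whose absolute
value is largest at the left end of `[n₀, ∞)`; by the mean value theorem every
`n_{i,j} ^ (-t)` with `n_{i,j} - n₀ < M₁ M₂` lies within `t M₁ M₂ n₀ ^ (-t - 1)` of `n₀ ^ (-t)`.
Each coordinate deviates from its lattice value by a sum of at most `M₁` resp. `M₂` such
differences. -/

lemma neg_mul_sub_le_rpow_neg_sub {t a b : ℝ} (ht : 0 ≤ t) (ha : 0 < a) (hab : a ≤ b) :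
    -(t * a ^ (-t - 1)) * (b - a) ≤ b ^ (-t) - a ^ (-t) := by
  have hdiff : ∀ x ∈ Set.Ici a, HasDerivAt (fun x : ℝ ↦ x ^ (-t)) (-t * x ^ (-t - 1)) x :=
    fun x hx ↦ Real.hasDerivAt_rpow_const (Or.inl (ha.trans_le hx).ne')
  refine (convex_Ici a).mul_sub_le_image_sub_of_le_deriv
    (fun x hx ↦ (hdiff x hx).continuousAt.continuousWithinAt)
    (fun x hx ↦ (hdiff x (interior_subset hx)).differentiableAt.differentiableWithinAt)
    (fun x hx ↦ ?_) a Set.self_mem_Ici b hab hab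
  rw [interior_Ici, Set.mem_Ioi] at hx
  rw [(hdiff x hx.le).deriv, neg_mul, neg_le_neg_iff]
  exact mul_le_mul_of_nonneg_left (Real.rpow_le_rpow_of_nonpos ha hx.le (by linarith)) ht

lemma abs_rpow_neg_sub_rpow_neg_le {t a b : ℝ} (ht : 0 ≤ t) (ha : 0 < a) (hab : a ≤ b) :
    |b ^ (-t) - a ^ (-t)| ≤ t * (b - a) * a ^ (-t - 1) := by
  have hanti : b ^ (-t) ≤ a ^ (-t) := Real.rpow_le_rpow_of_nonpos ha hab (by linarith)
  rw [abs_of_nonpos (sub_nonpos.mpr hanti)]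
  linarith [neg_mul_sub_le_rpow_neg_sub ht ha hab]

lemma abs_sum_sub_card_mul_le {ι : Type*} (s : Finset ι) (f : ι → ℝ) {c B : ℝ}
    (h : ∀ i ∈ s, |f i - c| ≤ B) : |∑ i ∈ s, f i - #s * c| ≤ #s * B := by
  calc |∑ i ∈ s, f i - #s * c| = |∑ i ∈ s, (f i - c)| := by
        rw [sum_sub_distrib, sum_const, nsmul_eq_mul]
    _ ≤ ∑ i ∈ s, |f i - c| := abs_sum_le_sum_abs _ _
    _ ≤ #s * B := by simpa using sum_le_sum h

lemma nij_lt_add_mul {n₀ M₁ M₂ i j : ℕ} (hi : i < M₁) (hj : j < M₂) :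
    nij n₀ M₁ i j < n₀ + M₁ * M₂ := by
  have : j * M₁ + i < M₁ * M₂ :=
    calc j * M₁ + i < (j + 1) * M₁ := by linarith
      _ ≤ M₂ * M₁ := Nat.mul_le_mul_right _ hj
      _ = M₁ * M₂ := Nat.mul_comm _ _
  unfold nij
  omega

lemma abs_nij_rpow_neg_sub_le {t : ℝ} (ht : 0 ≤ t) {n₀ M₁ M₂ i j : ℕ} (hn₀ : 1 ≤ n₀)
    (hi : i < M₁) (hj : j < M₂) :
    |(nij n₀ M₁ i j : ℝ) ^ (-t) - (n₀ : ℝ) ^ (-t)| ≤ t * (M₁ * M₂) * (n₀ : ℝ) ^ (-t - 1) := by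
  have hn₀_pos : (0 : ℝ) < n₀ := by exact_mod_cast hn₀
  have hle : (n₀ : ℝ) ≤ nij n₀ M₁ i j := Nat.cast_le.mpr (by unfold nij; omega)
  have hsub : (nij n₀ M₁ i j : ℝ) - n₀ ≤ M₁ * M₂ := by
    rw [sub_le_iff_le_add']
    exact_mod_cast (nij_lt_add_mul hi hj).le
  refine (abs_rpow_neg_sub_rpow_neg_le ht hn₀_pos hle).trans ?_
  gcongr

theorem lattice_approximation_general (t : ℝ) (ht0 : 0 < t)
    (n₀ M₁ M₂ : ℕ) (hn₀ : 1 ≤ n₀) (w : ℝ) :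
    ∀ i j : ℕ, i < M₁ → j < M₂ →
      |xij t w n₀ M₁ i j - (w - ((M₁ : ℝ) - (i : ℝ)) * (n₀ : ℝ) ^ (-t))| ≤
        t * (M₁ : ℝ) ^ 2 * (M₂ : ℝ) * (n₀ : ℝ) ^ (-t - 1) ∧
      |yij t n₀ M₁ i j - (j : ℝ) * (n₀ : ℝ) ^ (-t)| ≤
        t * (M₁ : ℝ) * (M₂ : ℝ) ^ 2 * (n₀ : ℝ) ^ (-t - 1) := by
  intro i j hi hj
  set B := t * (M₁ * M₂) * (n₀ : ℝ) ^ (-t - 1)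
  have hrow := abs_sum_sub_card_mul_le (Ico i M₁) (fun i' ↦ (nij n₀ M₁ i' j : ℝ) ^ (-t))
    (c := (n₀ : ℝ) ^ (-t)) fun i' hi' ↦ abs_nij_rpow_neg_sub_le ht0.le hn₀ (mem_Ico.mp hi').2 hj
  have hcol := abs_sum_sub_card_mul_le (range j) (fun j' ↦ (nij n₀ M₁ i j' : ℝ) ^ (-t))
    (c := (n₀ : ℝ) ^ (-t)) fun j' hj' ↦ abs_nij_rpow_neg_sub_le ht0.le hn₀ hi
      ((mem_range.mp hj').trans hj)
  rw [Nat.card_Ico, Nat.cast_sub hi.le] at hrow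
  rw [card_range] at hcol
  constructor
  · rw [xij, sub_sub_sub_cancel_left, abs_sub_comm]
    calc _ ≤ ((M₁ : ℝ) - i) * B := hrow
      _ ≤ M₁ * B := by gcongr; exact sub_le_self _ i.cast_nonneg
      _ = _ := by ring
  · calc _ ≤ (j : ℝ) * B := hcol
      _ ≤ M₂ * B := by gcongr
      _ = _ := by ring

/-- Lattice approximation estimates for the corners `(x_{i,j}, y_{i,j})` of the
near-lattice packing. -/
theorem lattice_approximation (t : ℝ) (ht0 : 0 < t) (ht1 : t < 1)
    (n₀ M₁ M₂ : ℕ) (hn₀ : 1 ≤ n₀) (hM₁ : 1 ≤ M₁) (hM₂ : 1 ≤ M₂) (w : ℝ) :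
    ∀ i j : ℕ, i < M₁ → j < M₂ →
      |xij t w n₀ M₁ i j - (w - ((M₁ : ℝ) - (i : ℝ)) * (n₀ : ℝ) ^ (-t))| ≤
        t * (M₁ : ℝ) ^ 2 * (M₂ : ℝ) * (n₀ : ℝ) ^ (-t - 1) ∧
      |yij t n₀ M₁ i j - (j : ℝ) * (n₀ : ℝ) ^ (-t)| ≤
        t * (M₁ : ℝ) * (M₂ : ℝ) ^ 2 * (n₀ : ℝ) ^ (-t - 1) :=
  lattice_approximation_general t ht0 n₀ M₁ M₂ hn₀ w
end

section
/- Let 1/2 < t < 1 and let M₁, M₂ ≥ 1 be natural numbers. For a natural number n₀ ≥ 1 and a real number w, define for 0 ≤ i < M₁ and 0 ≤ j < M₂: n_{i,j} := n₀ + j·M₁ + i, x_{i,j} := w − ∑_{i'=i}^{M₁−1} n_{i',j}^{-t}, y_{i,j} := ∑_{j'=0}^{j−1} n_{i,j'}^{-t}, and the square S_{i,j} := [x_{i,j}, x_{i,j} + n_{i,j}^{-t}] × [y_{i,j}, y_{i,j} + n_{i,j}^{-t}]. Then: (a) for every n₀ ≥ 1, if w ≥ M₁·n₀^{-t} then every S_{i,j}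 is contained in [0, w] × [0, M₂·n₀^{-t}]; and (b) there exists a natural number N₀ (depending only on t, M₁, M₂) such that for every n₀ ≥ N₀ the squares S_{i,j}, over all 0 ≤ i < M₁ and 0 ≤ j < M₂, have pairwise disjoint interiors. -/
open Set Finset

/-- The square `S_{i,j}` of sidelength `n_{i,j}^{-t}` with bottom-left corner
`(x_{i,j}, y_{i,j})`. -/
def Sij (t w : ℝ) (n₀ M₁ i j : ℕ) : Set (ℝ × ℝ) :=
  Set.Icc (xij t w n₀ M₁ i j) (xij t w n₀ M₁ i j + ((nij n₀ M₁ i j : ℕ) : ℝ) ^ (-t)) ×ˢ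
  Set.Icc (yij t n₀ M₁ i j) (yij t n₀ M₁ i j + ((nij n₀ M₁ i j : ℕ) : ℝ) ^ (-t))

/-!
For `t ≥ 0` and `n₀ ≥ 1` the side lengths `n_{i,j}^{-t}` decrease along both indices. So each
square ends on the right where the next square of its row begins, and `x_{i,j}` increases in `i`
and `j`; each square ends on top where the next square of its column begins, and `y_{i,j}`
increases in `j` and decreases in `i`. Hence any two distinct squares are separated by a vertical
or a horizontal line, already for every `n₀ ≥ 1`. Bounding every side length by `n₀^{-t}` gives
the enclosing rectangle.
-/

lemma disjoint_interior_Icc_prod_Icc {α : Type*} [LinearOrder α] [TopologicalSpace α]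
    [OrderTopology α] [DenselyOrdered α] [NoMinOrder α] [NoMaxOrder α]
    {a b c d a' b' c' d' : α} (h : b ≤ a' ∨ d ≤ c') :
    Disjoint (interior (Icc a b ×ˢ Icc c d)) (interior (Icc a' b' ×ˢ Icc c' d')) := by
  have ioo_disjoint : ∀ {p q r s : α}, q ≤ r → Disjoint (Ioo p q) (Ioo r s) :=
    fun hqr => Set.disjoint_left.2 fun _ hx hx' => lt_asymm (hx.2.trans_le hqr) hx'.1
  rw [interior_prod_eq, interior_prod_eq, interior_Icc, interior_Icc, interior_Icc, interior_Icc,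
    Set.disjoint_prod]
  exact h.imp ioo_disjoint ioo_disjoint

lemma nij_le_nij (n₀ M₁ : ℕ) {i i' j j' : ℕ} (hi : i ≤ i') (hj : j ≤ j') :
    nij n₀ M₁ i j ≤ nij n₀ M₁ i' j' := by
  unfold nij
  gcongr

lemma le_nij (n₀ M₁ i j : ℕ) : n₀ ≤ nij n₀ M₁ i j := by
  unfold nij
  omega

section

variable {t : ℝ} (ht : 0 ≤ t) {n₀ : ℕ} (hn₀ : 1 ≤ n₀) {M₁ : ℕ}

include ht hn₀ in
lemma rpow_nij_le_rpow_nij {i i' j j' : ℕ} (hi : i ≤ i') (hj : j ≤ j') :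
    ((nij n₀ M₁ i' j' : ℕ) : ℝ) ^ (-t) ≤ ((nij n₀ M₁ i j : ℕ) : ℝ) ^ (-t) :=
  Real.rpow_le_rpow_of_nonpos (by exact_mod_cast hn₀.trans (le_nij n₀ M₁ i j))
    (by exact_mod_cast nij_le_nij n₀ M₁ hi hj) (neg_nonpos.mpr ht)

include ht hn₀ in
lemma rpow_nij_le_rpow (i j : ℕ) : ((nij n₀ M₁ i j : ℕ) : ℝ) ^ (-t) ≤ (n₀ : ℝ) ^ (-t) :=
  Real.rpow_le_rpow_of_nonpos (by exact_mod_cast hn₀) (by exact_mod_cast le_nij n₀ M₁ i j)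
    (neg_nonpos.mpr ht)

lemma xij_add_rpow_nij (w : ℝ) {i : ℕ} (j : ℕ) (hi : i < M₁) :
    xij t w n₀ M₁ i j + ((nij n₀ M₁ i j : ℕ) : ℝ) ^ (-t) = xij t w n₀ M₁ (i + 1) j := by
  rw [xij, xij, Finset.sum_eq_sum_Ico_succ_bot hi]
  ring

lemma yij_add_rpow_nij (i j : ℕ) :
    yij t n₀ M₁ i j + ((nij n₀ M₁ i j : ℕ) : ℝ) ^ (-t) = yij t n₀ M₁ i (j + 1) :=
  (Finset.sum_range_succ _ j).symm

lemma xij_le (w : ℝ) (i j : ℕ) : xij t w n₀ M₁ i j ≤ w :=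
  sub_le_self _ (Finset.sum_nonneg fun _ _ => Real.rpow_nonneg (Nat.cast_nonneg _) _)

lemma yij_nonneg (i j : ℕ) : 0 ≤ yij t n₀ M₁ i j :=
  Finset.sum_nonneg fun _ _ => Real.rpow_nonneg (Nat.cast_nonneg _) _

include ht hn₀ in
lemma sub_le_xij (w : ℝ) (i j : ℕ) : w - M₁ * (n₀ : ℝ) ^ (-t) ≤ xij t w n₀ M₁ i j := by
  have hcard : ((Finset.Ico i M₁).card : ℝ) ≤ M₁ := by
    rw [Nat.card_Ico]
    exact_mod_cast Nat.sub_le M₁ i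
  have hsum : ∑ i' ∈ Finset.Ico i M₁, ((nij n₀ M₁ i' j : ℕ) : ℝ) ^ (-t) ≤ M₁ * (n₀ : ℝ) ^ (-t) :=
    calc _ ≤ (Finset.Ico i M₁).card • (n₀ : ℝ) ^ (-t) :=
          Finset.sum_le_card_nsmul _ _ _ fun i' _ => rpow_nij_le_rpow ht hn₀ i' j
      _ ≤ M₁ * (n₀ : ℝ) ^ (-t) := by
          rw [nsmul_eq_mul]
          exact mul_le_mul_of_nonneg_right hcard (Real.rpow_nonneg (Nat.cast_nonneg n₀) _)
  exact sub_le_sub_left hsum w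

include ht hn₀ in
lemma yij_le (i j : ℕ) : yij t n₀ M₁ i j ≤ j * (n₀ : ℝ) ^ (-t) := by
  simpa [yij] using Finset.sum_le_card_nsmul (Finset.range j) _ _
    fun j' _ => rpow_nij_le_rpow ht hn₀ (M₁ := M₁) i j'

include ht hn₀ in
lemma xij_le_xij (w : ℝ) {i i' j j' : ℕ} (hi : i ≤ i') (hj : j ≤ j') :
    xij t w n₀ M₁ i j ≤ xij t w n₀ M₁ i' j' := by
  have hsum : ∑ k ∈ Finset.Ico i' M₁, ((nij n₀ M₁ k j' : ℕ) : ℝ) ^ (-t) ≤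
      ∑ k ∈ Finset.Ico i M₁, ((nij n₀ M₁ k j : ℕ) : ℝ) ^ (-t) :=
    calc _ ≤ ∑ k ∈ Finset.Ico i' M₁, ((nij n₀ M₁ k j : ℕ) : ℝ) ^ (-t) :=
          Finset.sum_le_sum fun _ _ => rpow_nij_le_rpow_nij ht hn₀ le_rfl hj
      _ ≤ _ := Finset.sum_le_sum_of_subset_of_nonneg (Finset.Ico_subset_Ico hi le_rfl)
          fun _ _ _ => Real.rpow_nonneg (Nat.cast_nonneg _) _
  exact sub_le_sub_left hsum w

include ht hn₀ in
lemma yij_le_yij {i i' j j' : ℕ} (hi : i' ≤ i) (hj : j ≤ j') :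
    yij t n₀ M₁ i j ≤ yij t n₀ M₁ i' j' :=
  calc yij t n₀ M₁ i j ≤ ∑ k ∈ Finset.range j, ((nij n₀ M₁ i' k : ℕ) : ℝ) ^ (-t) :=
        Finset.sum_le_sum fun _ _ => rpow_nij_le_rpow_nij ht hn₀ hi le_rfl
    _ ≤ yij t n₀ M₁ i' j' :=
        Finset.sum_le_sum_of_subset_of_nonneg (Finset.range_subset_range.mpr hj)
          fun _ _ _ => Real.rpow_nonneg (Nat.cast_nonneg _) _

include ht hn₀ in
lemma Sij_subset_Icc_prod_Icc {w : ℝ} (hw : M₁ * (n₀ : ℝ) ^ (-t) ≤ w) {M₂ i j : ℕ}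
    (hi : i < M₁) (hj : j < M₂) :
    Sij t w n₀ M₁ i j ⊆ Icc 0 w ×ˢ Icc 0 (M₂ * (n₀ : ℝ) ^ (-t)) := by
  have hleft : 0 ≤ xij t w n₀ M₁ i j := by linarith [sub_le_xij ht hn₀ (M₁ := M₁) w i j]
  have hright := xij_le (t := t) (n₀ := n₀) (M₁ := M₁) w (i + 1) j
  have htop : yij t n₀ M₁ i (j + 1) ≤ M₂ * (n₀ : ℝ) ^ (-t) :=
    (yij_le ht hn₀ i (j + 1)).trans <| mul_le_mul_of_nonneg_right (by exact_mod_cast hj)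
      (Real.rpow_nonneg (Nat.cast_nonneg n₀) _)
  rw [Sij, xij_add_rpow_nij w j hi, yij_add_rpow_nij]
  exact Set.prod_mono (Set.Icc_subset_Icc hleft hright)
    (Set.Icc_subset_Icc (yij_nonneg i j) htop)

include ht hn₀ in
lemma disjoint_interior_Sij_of_precedes (w : ℝ) {i j i' j' : ℕ} (hi : i < M₁)
    (h : (i < i' ∧ j ≤ j') ∨ (i' ≤ i ∧ j < j')) :
    Disjoint (interior (Sij t w n₀ M₁ i j)) (interior (Sij t w n₀ M₁ i' j')) := by
  apply disjoint_interior_Icc_prod_Icc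
  rw [xij_add_rpow_nij w j hi, yij_add_rpow_nij]
  exact h.imp (fun ⟨hii, hjj⟩ => xij_le_xij ht hn₀ w hii hjj)
    (fun ⟨hii, hjj⟩ => yij_le_yij ht hn₀ hii hjj)

end

theorem near_lattice_packing_general (t : ℝ) (ht1 : 1 / 2 < t)
    (M₁ M₂ : ℕ) :
    (∀ (n₀ : ℕ) (w : ℝ), 1 ≤ n₀ → (M₁ : ℝ) * (n₀ : ℝ) ^ (-t) ≤ w →
      ∀ i j : ℕ, i < M₁ → j < M₂ →
        Sij t w n₀ M₁ i j ⊆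
          Set.Icc 0 w ×ˢ Set.Icc 0 ((M₂ : ℝ) * (n₀ : ℝ) ^ (-t))) ∧
    (∃ N₀ : ℕ, ∀ (n₀ : ℕ) (w : ℝ), N₀ ≤ n₀ →
      ∀ i j i' j' : ℕ, i < M₁ → j < M₂ → i' < M₁ → j' < M₂ → (i, j) ≠ (i', j') →
        Disjoint (interior (Sij t w n₀ M₁ i j))
          (interior (Sij t w n₀ M₁ i' j'))) := by
  have ht : 0 ≤ t := by linarith
  refine ⟨fun n₀ w hn₀ hw i j hi hj => Sij_subset_Icc_prod_Icc ht hn₀ hw hi hj,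
    1, fun n₀ w hn₀ i j i' j' hi _ hi' _ hne => ?_⟩
  have hne' : i ≠ i' ∨ j ≠ j' := not_and_or.mp fun h => hne (Prod.ext h.1 h.2)
  by_cases h : (i < i' ∧ j ≤ j') ∨ (i' ≤ i ∧ j < j')
  · exact disjoint_interior_Sij_of_precedes ht hn₀ w hi h
  · exact (disjoint_interior_Sij_of_precedes ht hn₀ w hi' (by omega)).symm

/-- The near-lattice placement is a packing: (a) each square `S_{i,j}` lies inside
`[0, w] × [0, M₂ n₀^{-t}]` whenever `w ≥ M₁ n₀^{-t}`; (b) for `n₀` large the squares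
have pairwise disjoint interiors. -/
theorem near_lattice_packing (t : ℝ) (ht1 : 1 / 2 < t) (ht2 : t < 1)
    (M₁ M₂ : ℕ) (hM₁ : 1 ≤ M₁) (hM₂ : 1 ≤ M₂) :
    (∀ (n₀ : ℕ) (w : ℝ), 1 ≤ n₀ → (M₁ : ℝ) * (n₀ : ℝ) ^ (-t) ≤ w →
      ∀ i j : ℕ, i < M₁ → j < M₂ →
        Sij t w n₀ M₁ i j ⊆
          Set.Icc 0 w ×ˢ Set.Icc 0 ((M₂ : ℝ) * (n₀ : ℝ) ^ (-t))) ∧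
    (∃ N₀ : ℕ, ∀ (n₀ : ℕ) (w : ℝ), N₀ ≤ n₀ →
      ∀ i j i' j' : ℕ, i < M₁ → j < M₂ → i' < M₁ → j' < M₂ → (i, j) ≠ (i', j') →
        Disjoint (interior (Sij t w n₀ M₁ i j))
          (interior (Sij t w n₀ M₁ i' j'))) :=
  near_lattice_packing_general t ht1 M₁ M₂
end

section
/- Let 1/2 < t < 1 and set δ := 1 − t. Then there exists a constant c > 0 (depending only on t) with the following property: for every real M ≥ 1 and every natural number n₀ ≥ 2, if ℛ is a finite family of rectangles with strictly positive widths w(R) and heights h(R) ≥ w(R) satisfying ∑_{R∈ℛ} w(R)·h(R) ≥ ∑_{n=n₀}^∞ n^{-2t} and ∑_{R∈ℛ} w(R)^δ·h(R) ≤ M^{-1+δ/2} · ∑_{n=1}^{n₀−1} n^{-(t+δt)}, then there exists R ∈ ℛ with w(R) ≥ c·M^{1+δ/2}·n₀^{-t}. -/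
/-!
Let `W` be the largest width. Writing `w h = w^t · w^(1-t) h ≤ W^t · w^(1-t) h` gives
`W^t ≥ area / weighted perimeter`. The tail `∑_{n ≥ n₀} n^(-2t)` is at least `n₀` terms of size
`(2n₀)^(-2t)`, and concavity of `x ↦ x^(1-p)` for `p = t + (1-t)t < 1` bounds the head sum by
`n₀^(1-p)/(1-p)`. The powers of `n₀` combine to `n₀^(-t²)`, and since
`(1 + δ/2) t ≤ 1 - δ/2` with `M ≥ 1`, taking `t`-th roots yields the claim.
-/

open Finset

namespace Real

lemma rpow_sub_one_le_rpow_sub {p x : ℝ} (hp0 : 0 ≤ p) (hp1 : p ≤ 1) (hx : 1 ≤ x) :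
    (x - 1) ^ (1 - p) ≤ x ^ (1 - p) - (1 - p) * x ^ (-p) := by
  have hx0 : 0 < x := by linarith
  have hbern : (1 + -x⁻¹) ^ (1 - p) ≤ 1 + (1 - p) * -x⁻¹ :=
    rpow_one_add_le_one_add_mul_self (by simpa using inv_le_one_of_one_le₀ hx)
      (by linarith) (by linarith)
  calc (x - 1) ^ (1 - p) = x ^ (1 - p) * (1 + -x⁻¹) ^ (1 - p) := by
        rw [← mul_rpow hx0.le (by simpa using inv_le_one_of_one_le₀ hx), mul_add, mul_one,
          mul_neg, mul_inv_cancel₀ hx0.ne', ← sub_eq_add_neg]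
    _ ≤ x ^ (1 - p) * (1 + (1 - p) * -x⁻¹) := by gcongr
    _ = x ^ (1 - p) - (1 - p) * x ^ (-p) := by
        rw [show -p = (1 - p) - 1 by ring, rpow_sub_one hx0.ne']
        ring

lemma one_sub_mul_sum_Icc_rpow_neg_le {p : ℝ} (hp0 : 0 ≤ p) (hp1 : p < 1) (N : ℕ) :
    (1 - p) * ∑ n ∈ Icc 1 N, (n : ℝ) ^ (-p) ≤ (N : ℝ) ^ (1 - p) := by
  induction N with
  | zero => simpa using rpow_nonneg le_rfl (1 - p)
  | succ N ih =>
    have hstep := rpow_sub_one_le_rpow_sub hp0 hp1.le (x := (N + 1 : ℕ)) (by simp)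
    rw [sum_Icc_succ_top (by omega), mul_add]
    push_cast at hstep ⊢
    simp only [add_sub_cancel_right] at hstep
    linarith

lemma two_rpow_neg_mul_rpow_le_tsum_nat_add {q : ℝ} (hq : 1 < q) (N : ℕ) :
    2 ^ (-q) * (N : ℝ) ^ (1 - q) ≤ ∑' n : ℕ, ((N + n : ℕ) : ℝ) ^ (-q) := by
  have hsum : Summable fun n : ℕ ↦ ((N + n : ℕ) : ℝ) ^ (-q) := by
    simpa [add_comm] using (summable_nat_add_iff N).mpr (summable_nat_rpow.mpr (by linarith))
  calc 2 ^ (-q) * (N : ℝ) ^ (1 - q) = ∑ _n ∈ range N, (2 * N : ℝ) ^ (-q) := by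
        rw [sum_const, card_range, nsmul_eq_mul, mul_rpow zero_le_two N.cast_nonneg,
          sub_eq_add_neg, rpow_one_add' N.cast_nonneg (by linarith)]
        ring
    _ ≤ ∑ n ∈ range N, ((N + n : ℕ) : ℝ) ^ (-q) := by
        refine sum_le_sum fun n hn ↦ rpow_le_rpow_of_nonpos ?_ ?_ (by linarith)
        · have : 0 < N + n := by linarith [mem_range.mp hn]
          positivity
        · have : n < N := mem_range.mp hn
          push_cast
          linarith [show (n : ℝ) < N by exact_mod_cast this]
    _ ≤ _ := hsum.sum_le_tsum _ fun _ _ ↦ rpow_nonneg (Nat.cast_nonneg _) _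

lemma rpow_inv_mul_le_of_mul_rpow_le {K x y t : ℝ} (hK : 0 ≤ K) (hx : 0 ≤ x) (hy : 0 ≤ y)
    (ht : 0 < t) (h : K * x ^ t ≤ y ^ t) : K ^ t⁻¹ * x ≤ y := by
  rwa [← rpow_le_rpow_iff (by positivity) hy ht, mul_rpow (by positivity) hx,
    rpow_inv_rpow hK ht.ne']

end Real

open Real

lemma sum_mul_le_rpow_mul_sum_rpow_mul {ι : Type*} (s : Finset ι) {w h : ι → ℝ} {t W : ℝ}
    (ht : 0 ≤ t) (hw : ∀ i ∈ s, 0 ≤ w i) (hwW : ∀ i ∈ s, w i ≤ W) (hh : ∀ i ∈ s, 0 ≤ h i) :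
    ∑ i ∈ s, w i * h i ≤ W ^ t * ∑ i ∈ s, w i ^ (1 - t) * h i := by
  rw [mul_sum]
  refine sum_le_sum fun i hi ↦ ?_
  calc w i * h i = w i ^ t * (w i ^ (1 - t) * h i) := by
        rw [← mul_assoc, ← rpow_add' (hw i hi) (by norm_num), add_sub_cancel, rpow_one]
    _ ≤ W ^ t * (w i ^ (1 - t) * h i) := by
        gcongr
        · exact mul_nonneg (rpow_nonneg (hw i hi) _) (hh i hi)
        · exact hw i hi
        · exact hwW i hi

lemma mul_rpow_le_of_le_mul_of_le_rpow_mul {t M N V P : ℝ} (ht : t < 1) (hM : 1 ≤ M)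
    (hN : 0 < N) (hV : 0 ≤ V)
    (harea : 2 ^ (-(2 * t)) * N ^ (1 - 2 * t) ≤ V * P)
    (hper : P ≤ M ^ (-1 + (1 - t) / 2) *
      (N ^ (1 - (t + (1 - t) * t)) / (1 - (t + (1 - t) * t)))) :
    2 ^ (-(2 * t)) * (1 - (t + (1 - t) * t)) * (M ^ (1 + (1 - t) / 2) * N ^ (-t)) ^ t ≤ V := by
  set p := t + (1 - t) * t
  have h1p : 0 < 1 - p := by nlinarith
  set E := M ^ (1 - (1 - t) / 2)
  set A := N ^ (1 - p)
  have hE : 0 < E := by positivity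
  have hA : 0 < A := by positivity
  have hsplit : N ^ (1 - 2 * t) = N ^ (-t * t) * A := by
    rw [← rpow_add hN]
    congr 1
    ring
  have hME : M ^ (-1 + (1 - t) / 2) = E⁻¹ := by
    rw [← rpow_neg (by positivity)]
    ring_nf
  calc 2 ^ (-(2 * t)) * (1 - p) * (M ^ (1 + (1 - t) / 2) * N ^ (-t)) ^ t
      = 2 ^ (-(2 * t)) * (1 - p) * M ^ ((1 + (1 - t) / 2) * t) * N ^ (-t * t) := by
        rw [mul_rpow (by positivity) (by positivity), ← rpow_mul (by positivity),
          ← rpow_mul hN.le]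
        ring
    _ ≤ 2 ^ (-(2 * t)) * (1 - p) * E * N ^ (-t * t) := by
        gcongr
        exact rpow_le_rpow_of_exponent_le hM (by nlinarith)
    _ = 2 ^ (-(2 * t)) * N ^ (1 - 2 * t) * ((1 - p) * E / A) := by
        rw [hsplit]
        field_simp
    _ ≤ V * (E⁻¹ * (A / (1 - p))) * ((1 - p) * E / A) := by
        rw [← hME]
        exact mul_le_mul_of_nonneg_right (harea.trans (by gcongr)) (by positivity)
    _ = V := by
        field_simp

/-- Key pigeonhole step of the downward induction: for `1/2 < t < 1` and `δ = 1 - t`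
there is `c > 0` such that for all `M ≥ 1` and `n₀ ≥ 2`, any finite family of
rectangles (widths `w ≤ h` heights, both positive) of total area at least
`∑_{n ≥ n₀} n^{-2t}` and weighted total perimeter at most
`M^{-1+δ/2} ∑_{n=1}^{n₀-1} n^{-(t+δt)}` contains a rectangle of width at least
`c M^{1+δ/2} n₀^{-t}`. -/
theorem exists_wide_rectangle (t : ℝ) (ht1 : 1 / 2 < t) (ht2 : t < 1) :
    ∃ c : ℝ, 0 < c ∧
      ∀ M : ℝ, 1 ≤ M → ∀ n₀ : ℕ, 2 ≤ n₀ →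
      ∀ (ι : Type) (s : Finset ι) (w h : ι → ℝ),
        (∀ i ∈ s, 0 < w i) → (∀ i ∈ s, w i ≤ h i) →
        ((∑' n : ℕ, ((n₀ + n : ℕ) : ℝ) ^ (-(2 * t))) ≤ ∑ i ∈ s, w i * h i) →
        (∑ i ∈ s, w i ^ (1 - t) * h i ≤
          M ^ (-1 + (1 - t) / 2) *
            ∑ n ∈ Finset.Ico 1 n₀, (n : ℝ) ^ (-(t + (1 - t) * t))) →
        ∃ i ∈ s, c * M ^ (1 + (1 - t) / 2) * (n₀ : ℝ) ^ (-t) ≤ w i := by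
  set p := t + (1 - t) * t
  have hp0 : 0 ≤ p := by nlinarith
  have hp1 : p < 1 := by nlinarith
  have hK : 0 < 2 ^ (-(2 * t)) * (1 - p) := by have := sub_pos.mpr hp1; positivity
  refine ⟨(2 ^ (-(2 * t)) * (1 - p)) ^ t⁻¹, by positivity, ?_⟩
  intro M hM n₀ hn₀ ι s w h hw hwh harea hper
  have ha : (0 : ℝ) < n₀ := by positivity
  have htail := two_rpow_neg_mul_rpow_le_tsum_nat_add (q := 2 * t) (by linarith) n₀
  have hhead : ∑ n ∈ Ico 1 n₀, (n : ℝ) ^ (-p) ≤ (n₀ : ℝ) ^ (1 - p) / (1 - p) := by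
    rw [le_div_iff₀ (by linarith), mul_comm]
    exact le_trans (by gcongr; exact Ico_subset_Icc_self)
      (one_sub_mul_sum_Icc_rpow_neg_le hp0 hp1 n₀)
  have hs : s.Nonempty :=
    nonempty_of_sum_ne_zero ((htail.trans harea).trans_lt' (by positivity)).ne'
  obtain ⟨i, hi, hmax⟩ := s.exists_max_image w hs
  have hpig := sum_mul_le_rpow_mul_sum_rpow_mul s (t := t) (by linarith)
    (fun j hj ↦ (hw j hj).le) hmax (fun j hj ↦ (hw j hj).le.trans (hwh j hj))
  refine ⟨i, hi, ?_⟩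
  rw [mul_assoc]
  exact rpow_inv_mul_le_of_mul_rpow_le hK.le (by positivity) (hw i hi).le (by linarith)
    (mul_rpow_le_of_le_mul_of_le_rpow_mul ht2 hM ha (rpow_nonneg (hw i hi).le t)
      (htail.trans (harea.trans hpig)) (hper.trans (by gcongr)))
end
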